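/- arXiv:1810.04850 — 7 statements merged into one kernel-verified Lean document; each statement's English description precedes it below -/
import Mathlib

section
/- Let a, b, c ∈ ℂ and let U ⊆ ℂ be an open set such that every z ∈ U satisfies z ≠ 0 and z ≠ 1. Suppose f₁, f₂ : ℂ → ℂ are differentiable on U and satisfy, for all z ∈ U, the first-order system f₁'(z) = ((c-a-b)/(z-1))·f₁(z) + ((b-c)/(z-1))·f₂(z) and f₂'(z) = ((c-a)/z)·f₁(z) - (c/z)·f₂(z). Then f₁' is differentiable on U and for every z ∈ U, z(1-z)·f₁''(z) + (c-(a+b+1)z)·f₁'(z) - a·b·f₁(z) = 0. -/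
/-! Clearing denominators, `(z - 1) f₁' = (c - a - b) f₁ + (b - c) f₂` on `U`. Differentiating
this identity expresses `f₁''` through `f₁'` and `f₂'`, and the second equation of the system,
in the form `z f₂' = (c - a) f₁ - c f₂`, then eliminates `f₂` altogether. -/

open Set

-- After substituting `h₁'` and `h₂`, the coefficient of `D₁` collapses to `c (1 - z)`,
-- and `h₁` then eliminates it.
lemma hypergeometric_eq_zero_of_cleared_system {a b c z F₁ F₂ D₁ D₂ E₁ : ℂ}
    (h₁ : (z - 1) * D₁ = (c - a - b) * F₁ + (b - c) * F₂)
    (h₂ : z * D₂ = (c - a) * F₁ - c * F₂)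
    (h₁' : D₁ + (z - 1) * E₁ = (c - a - b) * D₁ + (b - c) * D₂) :
    z * (1 - z) * E₁ + (c - (a + b + 1) * z) * D₁ - a * b * F₁ = 0 := by
  linear_combination (-z) * h₁' - (b - c) * h₂ - c * h₁

lemma DifferentiableOn.of_mul_eqOn {𝕜 : Type*} [NontriviallyNormedField 𝕜] {u F h : 𝕜 → 𝕜}
    {U : Set 𝕜} (hu : DifferentiableOn 𝕜 u U) (hu₀ : ∀ z ∈ U, u z ≠ 0)
    (hh : DifferentiableOn 𝕜 h U) (heq : EqOn (fun z => u z * F z) h U) :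
    DifferentiableOn 𝕜 F U :=
  (hh.div hu hu₀).congr fun z hz => by
    rw [Pi.div_apply, ← heq hz, mul_div_cancel_left₀ _ (hu₀ z hz)]

/-- The Haraoka first-order system implies Gauss' hypergeometric equation. -/
theorem stmt3 (a b c : ℂ) (U : Set ℂ) (hU : IsOpen U)
    (hU0 : ∀ z ∈ U, z ≠ 0) (hU1 : ∀ z ∈ U, z ≠ 1)
    (f₁ f₂ : ℂ → ℂ)
    (hf₁ : DifferentiableOn ℂ f₁ U) (hf₂ : DifferentiableOn ℂ f₂ U)
    (hsys₁ : ∀ z ∈ U, deriv f₁ z = ((c - a - b)/(z - 1)) * f₁ z + ((b - c)/(z - 1)) * f₂ z)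
    (hsys₂ : ∀ z ∈ U, deriv f₂ z = ((c - a)/z) * f₁ z - (c/z) * f₂ z) :
    DifferentiableOn ℂ (deriv f₁) U ∧
    ∀ z ∈ U, z * (1 - z) * deriv (deriv f₁) z + (c - (a + b + 1) * z) * deriv f₁ z
      - a * b * f₁ z = 0 := by
  have hcleared₁ : EqOn (fun z => (z - 1) * deriv f₁ z)
      (fun z => (c - a - b) * f₁ z + (b - c) * f₂ z) U := fun z hz => by
    have := sub_ne_zero.2 (hU1 z hz)
    simp only [hsys₁ z hz]
    field_simp
  have hcleared₂ : ∀ z ∈ U, z * deriv f₂ z = (c - a) * f₁ z - c * f₂ z := fun z hz => by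
    have := hU0 z hz
    rw [hsys₂ z hz]
    field_simp
  have hdiff₁ : DifferentiableOn ℂ (deriv f₁) U :=
    (differentiableOn_id.sub_const 1).of_mul_eqOn (fun z hz => sub_ne_zero.2 (hU1 z hz))
      ((hf₁.const_mul _).add (hf₂.const_mul _)) hcleared₁
  refine ⟨hdiff₁, fun z hz => hypergeometric_eq_zero_of_cleared_system
    (hcleared₁ hz) (hcleared₂ z hz) ?_⟩
  have hU_nhds := hU.mem_nhds hz
  have hderiv := hcleared₁.deriv hU hz
  rw [deriv_fun_mul (by fun_prop : DifferentiableAt ℂ (fun w : ℂ => w - 1) z)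
      (hdiff₁.differentiableAt hU_nhds),
    deriv_fun_add ((hf₁.differentiableAt hU_nhds).const_mul _)
      ((hf₂.differentiableAt hU_nhds).const_mul _),
    deriv_const_mul _ (hf₁.differentiableAt hU_nhds),
    deriv_const_mul _ (hf₂.differentiableAt hU_nhds)] at hderiv
  simpa only [deriv_sub_const, deriv_id'', one_mul] using hderiv
end

section
/- Let a, b, c ∈ ℂ and let U ⊆ ℂ be an open set such that every z ∈ U satisfies z ≠ 0 and z ≠ 1. Suppose f₁, f₂ : ℂ → ℂ are differentiable on U and satisfy, for all z ∈ U, the first-order system f₁'(z) = (b/(z-1))·f₂(z) and f₂'(z) = (-a/z)·f₁(z) + (-c/z + (c-a-b)/(z-1))·f₂(z). Then f₁' is differentiable on U and for every z ∈ U, z(1-z)·f₁''(z) + (c-(a+b+1)z)·f₁'(z) - a·b·f₁(z) = 0. -/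
theorem HasDerivAt.const_div_sub_mul {𝕜 : Type*} [NontriviallyNormedField 𝕜]
    {f : 𝕜 → 𝕜} {f' z : 𝕜} (b w : 𝕜) (hf : HasDerivAt f f' z) (hz : z ≠ w) :
    HasDerivAt (fun x => b / (x - w) * f x) (-b / (z - w) ^ 2 * f z + b / (z - w) * f') z := by
  have hinv : HasDerivAt (fun x => b / (x - w)) (-b / (z - w) ^ 2) z :=
    ((hasDerivAt_const z b).div ((hasDerivAt_id' z).sub_const w) (sub_ne_zero.2 hz)).congr_deriv
      (by ring)
  exact hinv.mul hf

/-- Gauss' operator applied to `f₁`, after `f₁'`, `f₁''` and `f₂'` have been eliminated through the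
system, vanishes identically in the values `y₁ = f₁ z`, `y₂ = f₂ z`. -/
theorem hypergeometric_combination_eq_zero {a b c z : ℂ} (y₁ y₂ : ℂ) (hz0 : z ≠ 0) (hz1 : z ≠ 1) :
    z * (1 - z) * (-b / (z - 1) ^ 2 * y₂
        + b / (z - 1) * (-a / z * y₁ + (-c / z + (c - a - b) / (z - 1)) * y₂))
      + (c - (a + b + 1) * z) * (b / (z - 1) * y₂) - a * b * y₁ = 0 := by
  have hz1' : z - 1 ≠ 0 := sub_ne_zero.2 hz1
  field_simp
  ring

theorem stmt4_general (a b c : ℂ) (U : Set ℂ) (hU : IsOpen U)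
    (hU0 : ∀ z ∈ U, z ≠ 0) (hU1 : ∀ z ∈ U, z ≠ 1)
    (f₁ f₂ : ℂ → ℂ)
    (hf₂ : DifferentiableOn ℂ f₂ U)
    (hsys₁ : ∀ z ∈ U, deriv f₁ z = (b/(z - 1)) * f₂ z)
    (hsys₂ : ∀ z ∈ U, deriv f₂ z = (-a/z) * f₁ z + (-c/z + (c - a - b)/(z - 1)) * f₂ z) :
    DifferentiableOn ℂ (deriv f₁) U ∧
    ∀ z ∈ U, z * (1 - z) * deriv (deriv f₁) z + (c - (a + b + 1) * z) * deriv f₁ z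
      - a * b * f₁ z = 0 := by
  have hderiv₂ : ∀ z ∈ U, HasDerivAt (deriv f₁)
      (-b / (z - 1) ^ 2 * f₂ z + b / (z - 1) * deriv f₂ z) z := fun z hz =>
    ((hf₂.differentiableAt (hU.mem_nhds hz)).hasDerivAt.const_div_sub_mul b 1 (hU1 z hz)
      ).congr_of_eventuallyEq (Filter.eventually_of_mem (hU.mem_nhds hz) hsys₁)
  refine ⟨fun z hz => (hderiv₂ z hz).differentiableAt.differentiableWithinAt, fun z hz => ?_⟩
  rw [(hderiv₂ z hz).deriv, hsys₂ z hz, hsys₁ z hz]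
  exact hypergeometric_combination_eq_zero _ _ (hU0 z hz) (hU1 z hz)

/-- The (φ₀₁, φ_{{1,1/z}}) first-order system implies Gauss' hypergeometric equation. -/
theorem stmt4 (a b c : ℂ) (U : Set ℂ) (hU : IsOpen U)
    (hU0 : ∀ z ∈ U, z ≠ 0) (hU1 : ∀ z ∈ U, z ≠ 1)
    (f₁ f₂ : ℂ → ℂ)
    (hf₁ : DifferentiableOn ℂ f₁ U) (hf₂ : DifferentiableOn ℂ f₂ U)
    (hsys₁ : ∀ z ∈ U, deriv f₁ z = (b/(z - 1)) * f₂ z)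
    (hsys₂ : ∀ z ∈ U, deriv f₂ z = (-a/z) * f₁ z + (-c/z + (c - a - b)/(z - 1)) * f₂ z) :
    DifferentiableOn ℂ (deriv f₁) U ∧
    ∀ z ∈ U, z * (1 - z) * deriv (deriv f₁) z + (c - (a + b + 1) * z) * deriv f₁ z
      - a * b * f₁ z = 0 :=
  stmt4_general a b c U hU hU0 hU1 f₁ f₂ hf₂ hsys₁ hsys₂
end

section
/- Let a, b, c ∈ ℂ and let U ⊆ ℂ be an open set such that every z ∈ U satisfies z ≠ 0 and z ≠ 1. Suppose f₁, f₂ : ℂ → ℂ are differentiable on U and satisfy, for all z ∈ U, the first-order system f₁'(z) = (-a/(z-1))·f₁(z) + ((c-b)/(z-1))·f₂(z) and f₂'(z) = (a/z - a/(z-1))·f₁(z) + (-c/z + (c-b)/(z-1))·f₂(z). Then f₁' is differentiable on U and for every z ∈ U, z(1-z)·f₁''(z) + (c-(a+b+1)z)·f₁'(z) - a·b·f₁(z) = 0. -/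
/-!
Clearing denominators, the system reads `(z - 1) f₁' = -a f₁ + (c - b) f₂` and
`z (z - 1) f₂' = -a f₁ + (c - b z) f₂`. The first equation exhibits `f₁'` as a holomorphic
function on `U`; differentiating it and eliminating `f₂` and `f₂'` with the two equations
gives `z - 1` times the hypergeometric operator applied to `f₁`.
-/

theorem hypergeometric_eq_zero_of_system {a b c z F F' F'' G G' : ℂ} (hz : z - 1 ≠ 0)
    (h₁ : (z - 1) * F' = -a * F + (c - b) * G)
    (h₂ : z * (z - 1) * G' = -a * F + (c - b * z) * G)
    (h₃ : F' + (z - 1) * F'' = -a * F' + (c - b) * G') :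
    z * (1 - z) * F'' + (c - (a + b + 1) * z) * F' - a * b * F = 0 := by
  have h : (z - 1) * (z * (1 - z) * F'' + (c - (a + b + 1) * z) * F' - a * b * F) = 0 := by
    linear_combination (-z * (z - 1)) * h₃ + (c - b * z) * h₁ - (c - b) * h₂
  exact (mul_eq_zero.mp h).resolve_left hz

section System

variable {a b c : ℂ} {U : Set ℂ} {f₁ f₂ : ℂ → ℂ}

theorem sub_one_mul_deriv_eq (hU1 : ∀ z ∈ U, z ≠ 1)
    (hsys₁ : ∀ z ∈ U, deriv f₁ z = (-a/(z - 1)) * f₁ z + ((c - b)/(z - 1)) * f₂ z) :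
    ∀ z ∈ U, (z - 1) * deriv f₁ z = -a * f₁ z + (c - b) * f₂ z := by
  intro z hz
  have : z - 1 ≠ 0 := sub_ne_zero.mpr (hU1 z hz)
  rw [hsys₁ z hz]
  field_simp

theorem mul_sub_one_mul_deriv_eq (hU0 : ∀ z ∈ U, z ≠ 0) (hU1 : ∀ z ∈ U, z ≠ 1)
    (hsys₂ : ∀ z ∈ U, deriv f₂ z = (a/z - a/(z - 1)) * f₁ z + (-c/z + (c - b)/(z - 1)) * f₂ z) :
    ∀ z ∈ U, z * (z - 1) * deriv f₂ z = -a * f₁ z + (c - b * z) * f₂ z := by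
  intro z hz
  have : z ≠ 0 := hU0 z hz
  have : z - 1 ≠ 0 := sub_ne_zero.mpr (hU1 z hz)
  rw [hsys₂ z hz]
  field_simp
  ring

theorem differentiableOn_deriv_of_sub_one_mul_deriv_eq (hU1 : ∀ z ∈ U, z ≠ 1)
    (hf₁ : DifferentiableOn ℂ f₁ U) (hf₂ : DifferentiableOn ℂ f₂ U)
    (h : ∀ z ∈ U, (z - 1) * deriv f₁ z = -a * f₁ z + (c - b) * f₂ z) :
    DifferentiableOn ℂ (deriv f₁) U := by
  have hquot : DifferentiableOn ℂ (fun w => (-a * f₁ w + (c - b) * f₂ w) / (w - 1)) U :=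
    ((hf₁.const_mul _).add (hf₂.const_mul _)).div (differentiableOn_id.sub_const 1)
      fun z hz => sub_ne_zero.mpr (hU1 z hz)
  refine hquot.congr fun z hz => ?_
  rw [← h z hz, mul_div_cancel_left₀ _ (sub_ne_zero.mpr (hU1 z hz))]

theorem deriv_sub_one_mul_deriv_eq (hU : IsOpen U)
    (hf₁ : DifferentiableOn ℂ f₁ U) (hf₂ : DifferentiableOn ℂ f₂ U)
    (hf₁' : DifferentiableOn ℂ (deriv f₁) U)
    (h : ∀ z ∈ U, (z - 1) * deriv f₁ z = -a * f₁ z + (c - b) * f₂ z) :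
    ∀ z ∈ U, deriv f₁ z + (z - 1) * deriv (deriv f₁) z =
      -a * deriv f₁ z + (c - b) * deriv f₂ z := by
  intro z hz
  have hnhds : U ∈ nhds z := hU.mem_nhds hz
  have hlhs : HasDerivAt (fun w => (w - 1) * deriv f₁ w)
      (1 * deriv f₁ z + (z - 1) * deriv (deriv f₁) z) z :=
    ((hasDerivAt_id z).sub_const 1).mul (hf₁'.differentiableAt hnhds).hasDerivAt
  have hrhs : HasDerivAt (fun w => -a * f₁ w + (c - b) * f₂ w)
      (-a * deriv f₁ z + (c - b) * deriv f₂ z) z :=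
    ((hf₁.differentiableAt hnhds).hasDerivAt.const_mul _).add
      ((hf₂.differentiableAt hnhds).hasDerivAt.const_mul _)
  have hagree := (Filter.eventuallyEq_of_mem hnhds h).symm
  simpa only [one_mul] using (hlhs.congr_of_eventuallyEq hagree).unique hrhs

end System

/-- The (φ₀₁, φ_{{1,∞}}) first-order system implies Gauss' hypergeometric equation. -/
theorem stmt5 (a b c : ℂ) (U : Set ℂ) (hU : IsOpen U)
    (hU0 : ∀ z ∈ U, z ≠ 0) (hU1 : ∀ z ∈ U, z ≠ 1)
    (f₁ f₂ : ℂ → ℂ)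
    (hf₁ : DifferentiableOn ℂ f₁ U) (hf₂ : DifferentiableOn ℂ f₂ U)
    (hsys₁ : ∀ z ∈ U, deriv f₁ z = (-a/(z - 1)) * f₁ z + ((c - b)/(z - 1)) * f₂ z)
    (hsys₂ : ∀ z ∈ U, deriv f₂ z = (a/z - a/(z - 1)) * f₁ z + (-c/z + (c - b)/(z - 1)) * f₂ z) :
    DifferentiableOn ℂ (deriv f₁) U ∧
    ∀ z ∈ U, z * (1 - z) * deriv (deriv f₁) z + (c - (a + b + 1) * z) * deriv f₁ z
      - a * b * f₁ z = 0 := by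
  have h₁ := sub_one_mul_deriv_eq hU1 hsys₁
  have h₂ := mul_sub_one_mul_deriv_eq hU0 hU1 hsys₂
  have hf₁' := differentiableOn_deriv_of_sub_one_mul_deriv_eq hU1 hf₁ hf₂ h₁
  have h₃ := deriv_sub_one_mul_deriv_eq hU hf₁ hf₂ hf₁' h₁
  exact ⟨hf₁', fun z hz => hypergeometric_eq_zero_of_system (sub_ne_zero.mpr (hU1 z hz))
    (h₁ z hz) (h₂ z hz) (h₃ z hz)⟩
end

section
/- Let a, b, c ∈ ℂ with c ≠ 0, and let U ⊆ ℂ be an open set such that every z ∈ U satisfies z ≠ 0 and z ≠ 1. Suppose f₁, f₂ : ℂ → ℂ are differentiable on U and satisfy, for all z ∈ U, the first-order system f₁'(z) = (-ab/(c(z-1)))·f₁(z) - (b(b-c)/(c(z-1)))·f₂(z) and f₂'(z) = (a(a-c)/(c(z-1)))·f₁(z) + (-c/z + (b-c)(a-c)/(c(z-1)))·f₂(z). Then f₁' is differentiable on U and for every z ∈ U, z(1-z)·f₁''(z) + (c-(a+b+1)z)·f₁'(z) - a·b·f₁(z) = 0. -/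
/-!
Writing the system as `f₁' = p f₁ + q f₂`, `f₂' = r f₁ + s f₂` with rational `p, q, r, s`,
differentiating the first equation and eliminating `f₂'` with the second gives
`f₁'' = (p' + p² + q r) f₁ + (q' + p q + q s) f₂`. Substituting this and `f₁'` into the
hypergeometric operator leaves a combination of `f₁` and `f₂` whose two rational coefficients
vanish identically in `z`.
-/

open Set Filter Topology

section LinearSystem

variable {𝕜 : Type*} [NontriviallyNormedField 𝕜] {U : Set 𝕜} {f₁ f₂ p q r s : 𝕜 → 𝕜}

theorem deriv_deriv_eq_of_linearSystem (hU : IsOpen U) (hp : DifferentiableOn 𝕜 p U)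
    (hq : DifferentiableOn 𝕜 q U) (hf₁ : DifferentiableOn 𝕜 f₁ U)
    (hf₂ : DifferentiableOn 𝕜 f₂ U) (h₁ : EqOn (deriv f₁) (fun z ↦ p z * f₁ z + q z * f₂ z) U)
    (h₂ : EqOn (deriv f₂) (fun z ↦ r z * f₁ z + s z * f₂ z) U) {z : 𝕜} (hz : z ∈ U) :
    deriv (deriv f₁) z = (deriv p z + p z ^ 2 + q z * r z) * f₁ z
      + (deriv q z + p z * q z + q z * s z) * f₂ z := by
  have hnhds : U ∈ 𝓝 z := hU.mem_nhds hz
  have hg : HasDerivAt (fun z ↦ p z * f₁ z + q z * f₂ z)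
      (deriv p z * f₁ z + p z * deriv f₁ z + (deriv q z * f₂ z + q z * deriv f₂ z)) z :=
    ((hp.differentiableAt hnhds).hasDerivAt.mul (hf₁.differentiableAt hnhds).hasDerivAt).add
      ((hq.differentiableAt hnhds).hasDerivAt.mul (hf₂.differentiableAt hnhds).hasDerivAt)
  rw [(h₁.eventuallyEq_of_mem hnhds).deriv_eq, hg.deriv, h₁ hz, h₂ hz]
  ring

end LinearSystem

theorem hasDerivAt_const_div_mul_sub_one {k c z : ℂ} (hc : c ≠ 0) (hz : z ≠ 1) :
    HasDerivAt (fun z ↦ k / (c * (z - 1))) (-k / (c * (z - 1) ^ 2)) z := by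
  have hden : HasDerivAt (fun z : ℂ ↦ c * (z - 1)) c z := by
    simpa using ((hasDerivAt_id z).sub_const 1).const_mul c
  refine ((hasDerivAt_const z k).div hden (mul_ne_zero hc (sub_ne_zero.mpr hz))).congr_deriv ?_
  field_simp
  ring

/-- The (φ₀₁, φ_{{1/z,∞}}) first-order system implies Gauss' hypergeometric equation. -/
theorem stmt6 (a b c : ℂ) (hc : c ≠ 0) (U : Set ℂ) (hU : IsOpen U)
    (hU0 : ∀ z ∈ U, z ≠ 0) (hU1 : ∀ z ∈ U, z ≠ 1)
    (f₁ f₂ : ℂ → ℂ)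
    (hf₁ : DifferentiableOn ℂ f₁ U) (hf₂ : DifferentiableOn ℂ f₂ U)
    (hsys₁ : ∀ z ∈ U, deriv f₁ z = (-(a * b)/(c * (z - 1))) * f₁ z - (b * (b - c)/(c * (z - 1))) * f₂ z)
    (hsys₂ : ∀ z ∈ U, deriv f₂ z = (a * (a - c)/(c * (z - 1))) * f₁ z + (-c/z + (b - c) * (a - c)/(c * (z - 1))) * f₂ z) :
    DifferentiableOn ℂ (deriv f₁) U ∧
    ∀ z ∈ U, z * (1 - z) * deriv (deriv f₁) z + (c - (a + b + 1) * z) * deriv f₁ z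
      - a * b * f₁ z = 0 := by
  set p : ℂ → ℂ := fun z ↦ -(a * b) / (c * (z - 1))
  set q : ℂ → ℂ := fun z ↦ -(b * (b - c)) / (c * (z - 1))
  have hp z (hz : z ∈ U) := hasDerivAt_const_div_mul_sub_one (k := -(a * b)) hc (hU1 z hz)
  have hq z (hz : z ∈ U) := hasDerivAt_const_div_mul_sub_one (k := -(b * (b - c))) hc (hU1 z hz)
  have hpU : DifferentiableOn ℂ p U := fun z hz ↦ (hp z hz).differentiableAt.differentiableWithinAt
  have hqU : DifferentiableOn ℂ q U := fun z hz ↦ (hq z hz).differentiableAt.differentiableWithinAt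
  have h₁ : EqOn (deriv f₁) (fun z ↦ p z * f₁ z + q z * f₂ z) U := fun z hz ↦ by
    rw [hsys₁ z hz]; ring
  refine ⟨?_, fun z hz ↦ ?_⟩
  · exact (DifferentiableOn.add (hpU.mul hf₁) (hqU.mul hf₂)).congr h₁
  · rw [deriv_deriv_eq_of_linearSystem hU hpU hqU hf₁ hf₂ h₁ hsys₂ hz,
      (hp z hz).deriv, (hq z hz).deriv, h₁ hz]
    have hz0 : z ≠ 0 := hU0 z hz
    have hz1 : z - 1 ≠ 0 := sub_ne_zero.mpr (hU1 z hz)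
    simp only [p, q]
    field_simp
    ring
end

section
/- Let a, b, c ∈ ℂ and let U ⊆ ℂ be an open set such that every z ∈ U satisfies z ≠ 0 and z ≠ 1. Suppose f₁, f₂ : ℂ → ℂ are differentiable on U and satisfy, for all z ∈ U, the first-order system f₁'(z) = (-b/(z-1))·f₁(z) + (b/(z-1))·f₂(z) and f₂'(z) = ((c-a)/z - (c-a)/(z-1))·f₁(z) + (-c/z + (c-a)/(z-1))·f₂(z). Then f₁' is differentiable on U and for every z ∈ U, z(1-z)·f₁''(z) + (c-(a+b+1)z)·f₁'(z) - a·b·f₁(z) = 0. -/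
open Set

/-
Write the first equation as `f₁' = b (f₂ - f₁) / (z - 1)`. Its right-hand side is holomorphic on `U`,
so `f₁'` is too, and the quotient rule gives `f₁''` in terms of `f₁, f₂, f₁', f₂'`. Substituting the
system for `f₁'` and `f₂'` turns Gauss' equation into a polynomial identity in `f₁ z`, `f₂ z`, `1/z`
and `1/(z - 1)`.
-/

theorem deriv_deriv_eq_of_eqOn {𝕜 F : Type*} [NontriviallyNormedField 𝕜] [NormedAddCommGroup F]
    [NormedSpace 𝕜 F] {f g : 𝕜 → F} {U : Set 𝕜} (hU : IsOpen U) (h : EqOn (deriv f) g U)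
    {z : 𝕜} (hz : z ∈ U) : deriv (deriv f) z = deriv g z :=
  (Filter.eventuallyEq_of_mem (hU.mem_nhds hz) h).deriv_eq

theorem hasDerivAt_mul_sub_div_sub_one {f₁ f₂ : ℂ → ℂ} {f₁' f₂' z : ℂ} (b : ℂ)
    (h₁ : HasDerivAt f₁ f₁' z) (h₂ : HasDerivAt f₂ f₂' z) (hz : z ≠ 1) :
    HasDerivAt (fun w => b * (f₂ w - f₁ w) / (w - 1))
      ((b * (f₂' - f₁') * (z - 1) - b * (f₂ z - f₁ z)) / (z - 1) ^ 2) z := by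
  simpa using ((h₂.sub h₁).const_mul b).fun_div ((hasDerivAt_id z).sub_const 1) (sub_ne_zero.mpr hz)

theorem hypergeometric_of_system_at {a b c z x y x' y' x'' : ℂ} (hz0 : z ≠ 0) (hz1 : z ≠ 1)
    (hx' : x' = b * (y - x) / (z - 1))
    (hy' : y' = ((c - a) / z - (c - a) / (z - 1)) * x + (-c / z + (c - a) / (z - 1)) * y)
    (hx'' : x'' = (b * (y' - x') * (z - 1) - b * (y - x)) / (z - 1) ^ 2) :
    z * (1 - z) * x'' + (c - (a + b + 1) * z) * x' - a * b * x = 0 := by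
  have hz1' : z - 1 ≠ 0 := sub_ne_zero.mpr hz1
  subst hx'' hy' hx'
  field_simp
  ring

/-- The (φ₀₁, φ_{{0,1/z}}) first-order system implies Gauss' hypergeometric equation. -/
theorem stmt7 (a b c : ℂ) (U : Set ℂ) (hU : IsOpen U)
    (hU0 : ∀ z ∈ U, z ≠ 0) (hU1 : ∀ z ∈ U, z ≠ 1)
    (f₁ f₂ : ℂ → ℂ)
    (hf₁ : DifferentiableOn ℂ f₁ U) (hf₂ : DifferentiableOn ℂ f₂ U)
    (hsys₁ : ∀ z ∈ U, deriv f₁ z = (-b/(z - 1)) * f₁ z + (b/(z - 1)) * f₂ z)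
    (hsys₂ : ∀ z ∈ U, deriv f₂ z = ((c - a)/z - (c - a)/(z - 1)) * f₁ z + (-c/z + (c - a)/(z - 1)) * f₂ z) :
    DifferentiableOn ℂ (deriv f₁) U ∧
    ∀ z ∈ U, z * (1 - z) * deriv (deriv f₁) z + (c - (a + b + 1) * z) * deriv f₁ z
      - a * b * f₁ z = 0 := by
  set g : ℂ → ℂ := fun w => b * (f₂ w - f₁ w) / (w - 1)
  have hf₁' : EqOn (deriv f₁) g U := fun z hz => by
    rw [hsys₁ z hz]
    ring
  have hg : ∀ z ∈ U, HasDerivAt g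
      ((b * (deriv f₂ z - deriv f₁ z) * (z - 1) - b * (f₂ z - f₁ z)) / (z - 1) ^ 2) z :=
    fun z hz => hasDerivAt_mul_sub_div_sub_one b
      ((hf₁.differentiableAt (hU.mem_nhds hz)).hasDerivAt)
      ((hf₂.differentiableAt (hU.mem_nhds hz)).hasDerivAt) (hU1 z hz)
  refine ⟨DifferentiableOn.congr (fun z hz => (hg z hz).differentiableAt.differentiableWithinAt) hf₁',
    fun z hz => hypergeometric_of_system_at (hU0 z hz) (hU1 z hz) (hf₁' hz) (hsys₂ z hz) ?_⟩
  rw [deriv_deriv_eq_of_eqOn hU hf₁' hz, (hg z hz).deriv]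
end

section
/- Let a, b, c ∈ ℂ with 0 < Re(a), 0 < Re(c-a), and suppose c is not a nonpositive integer. Let z ∈ ℂ with |z| < 1. Then ∫_{t=0}^{1} t^{a-1}·(1-t)^{c-a-1}·(1-z·t)^{-b} dt = (Γ(a)·Γ(c-a)/Γ(c)) · ∑_{n=0}^{∞} ((a)_n (b)_n / ((c)_n · n!)) · zⁿ, where all powers of complex numbers are principal-branch complex powers (for t ∈ (0,1) the bases t, 1-t are positive reals and 1-zt has positive real part), Γ is the complex Gamma function, and (x)_n = ∏_{m=0}^{n-1}(x+m) is the Pochhammer symbol. -/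
/-!
Expand `(1 - z t)^(-b)` by the binomial series, which converges absolutely and uniformly in
`t ∈ [0, 1]` because `|z| < 1`, so it may be integrated term by term against the Beta weight
`t^(a-1) (1-t)^(c-a-1)`. The `n`-th term becomes `B(a + n, c - a)`, and the functional equation of
`Γ` turns this into `B(a, c - a) (a)ₙ / (c)ₙ`.
-/

open Complex Set MeasureTheory intervalIntegral Finset
open scoped Nat

theorem ascPochhammer_eval_eq_prod_range {R : Type*} [CommSemiring R] (r : R) (n : ℕ) :
    (ascPochhammer R n).eval r = ∏ m ∈ range n, (r + m) := by
  induction n with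
  | zero => simp
  | succ n ih => simp [ascPochhammer_succ_right, ih, prod_range_succ]

theorem Ring.choose_add_nat_sub_one {K : Type*} [Field K] [CharZero K] (r : K) (n : ℕ) :
    Ring.choose (r + n - 1) n = (∏ m ∈ range n, (r + m)) / n ! := by
  rw [← Ring.multichoose_eq, eq_div_iff (by exact_mod_cast n.factorial_ne_zero), mul_comm,
    ← nsmul_eq_mul, Ring.factorial_nsmul_multichoose_eq_ascPochhammer,
    Polynomial.ascPochhammer_smeval_eq_eval, ascPochhammer_eval_eq_prod_range]

namespace Complex

theorem hasFPowerSeriesOnBall_one_sub_cpow_neg (b : ℂ) :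
    HasFPowerSeriesOnBall (fun w ↦ (1 - w) ^ (-b))
      (.ofScalars ℂ fun n ↦ (∏ m ∈ range n, (b + m)) / n !) 0 1 := by
  simpa [cpow_neg, Ring.choose_add_nat_sub_one] using
    one_div_one_sub_cpow_hasFPowerSeriesOnBall_zero b

theorem hasSum_one_sub_cpow_neg (b : ℂ) {w : ℂ} (hw : ‖w‖ < 1) :
    HasSum (fun n ↦ (∏ m ∈ range n, (b + m)) / n ! * w ^ n) ((1 - w) ^ (-b)) := by
  simpa only [FormalMultilinearSeries.ofScalars_apply_eq, smul_eq_mul, zero_add] using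
    (hasFPowerSeriesOnBall_one_sub_cpow_neg b).hasSum (y := w) (by simpa [← ofReal_norm] using hw)

theorem summable_norm_pochhammer_div_factorial_mul_pow (b : ℂ) {w : ℂ} (hw : ‖w‖ < 1) :
    Summable fun n ↦ ‖(∏ m ∈ range n, (b + m)) / n ! * w ^ n‖ := by
  have hp := hasFPowerSeriesOnBall_one_sub_cpow_neg b
  simpa only [FormalMultilinearSeries.ofScalars_apply_eq, smul_eq_mul] using
    FormalMultilinearSeries.summable_norm_apply _ (x := w)
      (Metric.eball_subset_eball hp.r_le (by simpa [← ofReal_norm] using hw))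

theorem Gamma_add_nat_eq_mul_prod {s : ℂ} (hs : 0 < s.re) (n : ℕ) :
    Gamma (s + n) = Gamma s * ∏ m ∈ range n, (s + m) := by
  have hs' : ∀ k : ℕ, s ≠ -k := by
    rintro k rfl
    simp only [neg_re, natCast_re, Left.neg_pos_iff] at hs
    exact (Nat.cast_nonneg k).not_gt hs
  rw [← ascPochhammer_eval_eq_prod_range, ← Gamma_add_nat_div_Gamma_eq s hs',
    mul_div_cancel₀ _ (Gamma_ne_zero_of_re_pos hs)]

theorem betaIntegral_add_nat {u v : ℂ} (hu : 0 < u.re) (hv : 0 < v.re) (n : ℕ) :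
    betaIntegral (u + n) v
      = betaIntegral u v * (∏ m ∈ range n, (u + m)) / ∏ m ∈ range n, (u + v + m) := by
  have hun : 0 < (u + n).re := by simp only [add_re, natCast_re]; positivity
  rw [betaIntegral_eq_Gamma_mul_div _ _ hun hv, betaIntegral_eq_Gamma_mul_div _ _ hu hv,
    add_right_comm, Gamma_add_nat_eq_mul_prod hu, Gamma_add_nat_eq_mul_prod (add_pos hu hv)]
  ring

theorem betaIntegral_add_nat_eq_integral (u v : ℂ) (n : ℕ) :
    betaIntegral (u + n) v
      = ∫ t in (0:ℝ)..1, (t : ℂ) ^ n * ((t : ℂ) ^ (u - 1) * (1 - (t : ℂ)) ^ (v - 1)) := by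
  refine integral_congr_ae (Filter.Eventually.of_forall fun t ht ↦ ?_)
  rw [uIoc_of_le zero_le_one] at ht
  have ht : (t : ℂ) ≠ 0 := ofReal_ne_zero.2 ht.1.ne'
  rw [add_sub_right_comm, cpow_add _ _ ht, cpow_natCast]
  ring

end Complex

theorem hasSum_intervalIntegral_pow_mul {c : ℕ → ℂ} (hc : Summable fun n ↦ ‖c n‖) {g : ℝ → ℂ}
    (hg : IntervalIntegrable g volume 0 1) :
    HasSum (fun n ↦ c n * ∫ t in (0:ℝ)..1, (t : ℂ) ^ n * g t)
      (∫ t in (0:ℝ)..1, (∑' n, c n * (t : ℂ) ^ n) * g t) := by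
  have hpow : ∀ n, ∀ t ∈ uIoc (0:ℝ) 1, ‖c n * (t : ℂ) ^ n‖ ≤ ‖c n‖ := fun n t ht ↦ by
    rw [uIoc_of_le zero_le_one] at ht
    simpa [abs_of_pos ht.1] using
      mul_le_mul_of_nonneg_left (pow_le_one₀ ht.1.le ht.2) (norm_nonneg (c n))
  have hdom := hasSum_integral_of_dominated_convergence (F := fun n t ↦ c n * (t : ℂ) ^ n * g t)
    (fun n t ↦ ‖c n‖ * ‖g t‖)
    (fun n ↦ (Continuous.aestronglyMeasurable (by fun_prop)).mul hg.def'.aestronglyMeasurable)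
    (fun n ↦ Filter.Eventually.of_forall fun t ht ↦ by
      rw [norm_mul]; exact mul_le_mul_of_nonneg_right (hpow n t ht) (norm_nonneg _))
    (Filter.Eventually.of_forall fun t _ ↦ hc.mul_right _)
    (by simpa only [tsum_mul_right] using hg.norm.const_mul _)
    (Filter.Eventually.of_forall fun t ht ↦
      ((hc.of_norm_bounded fun n ↦ hpow n t ht).hasSum).mul_right (g t))
  simpa only [mul_assoc, intervalIntegral.integral_const_mul] using hdom

theorem stmt13_general (a b c : ℂ) (ha : 0 < a.re) (hca : 0 < (c - a).re)
    (z : ℂ) (hz : ‖z‖ < 1) :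
    (∫ t in (0 : ℝ)..1, (t : ℂ) ^ (a - 1) * ((1 : ℂ) - (t : ℂ)) ^ (c - a - 1)
        * (1 - z * (t : ℂ)) ^ (-b))
      = Complex.Gamma a * Complex.Gamma (c - a) / Complex.Gamma c
        * ∑' n : ℕ, ((∏ m ∈ Finset.range n, (a + m)) * (∏ m ∈ Finset.range n, (b + m))
            / ((∏ m ∈ Finset.range n, (c + m)) * (Nat.factorial n))) * z ^ n := by
  set coeff : ℕ → ℂ := fun n ↦ (∏ m ∈ range n, (b + m)) / n ! * z ^ n
  have hkernel : ∀ t ∈ uIcc (0:ℝ) 1, (1 - z * t) ^ (-b) = ∑' n, coeff n * (t : ℂ) ^ n := by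
    intro t ht
    rw [Set.uIcc_of_le zero_le_one] at ht
    have hzt : ‖z * t‖ < 1 := by
      rw [norm_mul, norm_real, Real.norm_of_nonneg ht.1]
      nlinarith [norm_nonneg z, ht.2]
    simp only [coeff, mul_assoc, ← mul_pow]
    exact (hasSum_one_sub_cpow_neg b hzt).tsum_eq.symm
  have hseries := hasSum_intervalIntegral_pow_mul
    (summable_norm_pochhammer_div_factorial_mul_pow b hz) (betaIntegral_convergent ha hca)
  calc _ = ∫ t in (0:ℝ)..1,
          (∑' n, coeff n * (t : ℂ) ^ n) * ((t : ℂ) ^ (a - 1) * (1 - (t : ℂ)) ^ (c - a - 1)) :=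
        integral_congr fun t ht ↦ by simp only [hkernel t ht]; ring
    _ = ∑' n, coeff n * betaIntegral (a + n) (c - a) := by
        simp only [betaIntegral_add_nat_eq_integral]
        exact hseries.tsum_eq.symm
    _ = _ := by
        rw [← tsum_mul_left]
        refine tsum_congr fun n ↦ ?_
        rw [betaIntegral_add_nat ha hca, betaIntegral_eq_Gamma_mul_div _ _ ha hca, add_sub_cancel]
        ring

/-- Euler's integral representation of Gauss' hypergeometric function:
`∫₀¹ t^{a-1}(1-t)^{c-a-1}(1-zt)^{-b} dt = (Γ(a)Γ(c-a)/Γ(c)) ∑ₙ (a)ₙ(b)ₙ/((c)ₙ n!) zⁿ`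
for `0 < Re a`, `0 < Re (c-a)`, `c` not a nonpositive integer, `|z| < 1`. -/
theorem stmt13 (a b c : ℂ) (ha : 0 < a.re) (hca : 0 < (c - a).re)
    (hc : ∀ m : ℕ, c ≠ -(m : ℂ)) (z : ℂ) (hz : ‖z‖ < 1) :
    (∫ t in (0 : ℝ)..1, (t : ℂ) ^ (a - 1) * ((1 : ℂ) - (t : ℂ)) ^ (c - a - 1)
        * (1 - z * (t : ℂ)) ^ (-b))
      = Complex.Gamma a * Complex.Gamma (c - a) / Complex.Gamma c
        * ∑' n : ℕ, ((∏ m ∈ Finset.range n, (a + m)) * (∏ m ∈ Finset.range n, (b + m))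
            / ((∏ m ∈ Finset.range n, (c + m)) * (Nat.factorial n))) * z ^ n :=
  stmt13_general a b c ha hca z hz
end

section
/- Let a, b, c ∈ ℂ with 0 < Re(a) and 0 < Re(c-a), and define f₀₁(z) = ∫_{t=0}^{1} t^{a-1}(1-t)^{c-a-1}(1-zt)^{-b} dt and f_{∞0}(z) = ∫_{t=0}^{1} t^{a-1}(1-t)^{c-a}(1-zt)^{-b} dt, using principal complex powers. Then for every z ∈ ℂ with z ∉ [1,∞) and z ≠ 0, both functions are complex-differentiable at z and satisfy f₀₁'(z) = ((c-a-b)/(z-1))·f₀₁(z) + ((b-c)/(z-1))·f_{∞0}(z) and f_{∞0}'(z) = ((c-a)/z)·f₀₁(z) - (c/z)·f_{∞0}(z). -/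
/-!
Write `I(p, q, r)(z) = ∫₀¹ t^p (1-t)^q (1-zt)^r dt`, so that `f₀₁ = I(a-1, c-a-1, -b)` and
`f_{∞0} = I(a-1, c-a, -b)`. Differentiating under the integral sign gives
`∂_z I(p-1, q, r) = -r I(p, q, r-1)`. Three linear relations between these integrals come from
`t + (1-t) = 1`, from `1 - zt = (1-z) + z(1-t)`, and from integrating the derivative of
`t^p (1-t)^q (1-zt)^r`, which vanishes at both ends (the relation `d log Φ ≡ 0`); eliminating the
auxiliary integrals with them yields the system. The condition `z ∉ [1, ∞)` keeps `1 - xt` in the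
slit plane for `t ∈ [0, 1]` and `x` near `z`, which provides the domination.
-/

open Complex Set MeasureTheory intervalIntegral Metric

noncomputable def eulerIntegral (p q r z : ℂ) : ℂ :=
  ∫ t in (0 : ℝ)..1, (t : ℂ) ^ p * ((1 : ℂ) - (t : ℂ)) ^ q * (1 - z * (t : ℂ)) ^ r

section

variable {p q z : ℂ}

theorem cpow_sub_one_mul_self {x : ℂ} (p : ℂ) (hx : x ≠ 0) : x ^ (p - 1) * x = x ^ p := by
  rw [cpow_sub _ _ hx, cpow_one, div_mul_cancel₀ _ hx]

theorem re_sub_one_gt_neg_one (hp : 0 < p.re) : -1 < (p - 1).re := by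
  rw [sub_re, one_re]
  linarith

theorem one_sub_mul_ofReal_mem_slitPlane (hz : z ∉ ((↑) : ℝ → ℂ) '' Ici 1) {t : ℝ}
    (ht : t ∈ Icc (0 : ℝ) 1) : 1 - z * t ∈ slitPlane := by
  rw [mem_slitPlane_iff]
  rcases eq_or_ne z.im 0 with him | him
  · have hre : z.re < 1 := by
      by_contra! h
      exact hz ⟨z.re, h, Complex.ext (by simp) (by simp [him])⟩
    left
    simp only [sub_re, one_re, mul_re, ofReal_re, ofReal_im, mul_zero, sub_zero]
    rcases le_or_gt z.re 0 with h | h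
    · nlinarith [mul_nonpos_of_nonpos_of_nonneg h ht.1]
    · nlinarith [mul_le_of_le_one_right h.le ht.2]
  · rcases ht.1.eq_or_lt with rfl | ht₀
    · simp
    · right
      simpa using mul_ne_zero him ht₀.ne'

theorem continuousOn_one_sub_mul_cpow (hz : z ∉ ((↑) : ℝ → ℂ) '' Ici 1) (r : ℂ) :
    ContinuousOn (fun t : ℝ => (1 - z * t) ^ r) (Icc 0 1) := fun _ ht =>
  (ContinuousAt.cpow (f := fun t : ℝ => 1 - z * t) (by fun_prop) continuousAt_const
    (one_sub_mul_ofReal_mem_slitPlane hz ht)).continuousWithinAt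

theorem intervalIntegrable_cpow_mul_cpow_mul (hp : -1 < p.re) (hq : -1 < q.re)
    {g : ℝ → ℂ} (hg : ContinuousOn g (Icc 0 1)) :
    IntervalIntegrable (fun t : ℝ => (t : ℂ) ^ p * ((1 : ℂ) - t) ^ q * g t) volume 0 1 := by
  have h := betaIntegral_convergent (u := p + 1) (v := q + 1)
    (by rw [add_re, one_re]; linarith) (by rw [add_re, one_re]; linarith)
  simp only [add_sub_cancel_right] at h
  exact h.mul_continuousOn (by rwa [uIcc_of_le zero_le_one])

theorem intervalIntegrable_eulerIntegrand (hp : -1 < p.re) (hq : -1 < q.re) (r : ℂ)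
    (hz : z ∉ ((↑) : ℝ → ℂ) '' Ici 1) :
    IntervalIntegrable (fun t : ℝ => (t : ℂ) ^ p * ((1 : ℂ) - t) ^ q * (1 - z * t) ^ r)
      volume 0 1 :=
  intervalIntegrable_cpow_mul_cpow_mul hp hq (continuousOn_one_sub_mul_cpow hz r)

theorem hasDerivAt_integral_mul_one_sub_mul_cpow {g : ℝ → ℂ}
    (hg : IntervalIntegrable g volume 0 1) (r : ℂ)
    (hz : z ∉ ((↑) : ℝ → ℂ) '' Ici 1) :
    HasDerivAt (fun w : ℂ => ∫ t in (0 : ℝ)..1, g t * (1 - w * t) ^ r)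
      (∫ t in (0 : ℝ)..1, g t * (r * (1 - z * t) ^ (r - 1) * -t)) z := by
  obtain ⟨ε, hε, hball⟩ : ∃ ε > 0, closedBall z ε ⊆ (((↑) : ℝ → ℂ) '' Ici 1)ᶜ :=
    nhds_basis_closedBall.mem_iff.1
      ((isometry_ofReal.isClosedEmbedding.isClosedMap _ isClosed_Ici).isOpen_compl.mem_nhds hz)
  have hslit : ∀ x ∈ closedBall z ε, ∀ t ∈ Icc (0 : ℝ) 1, 1 - x * t ∈ slitPlane :=
    fun x hx t ht => one_sub_mul_ofReal_mem_slitPlane (hball hx) ht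
  obtain ⟨C, hC⟩ := ((isCompact_closedBall z ε).prod isCompact_Icc).exists_bound_of_continuousOn
    (f := fun x : ℂ × ℝ => (1 - x.1 * x.2) ^ (r - 1)) fun x hx =>
      (ContinuousAt.cpow (f := fun x : ℂ × ℝ => 1 - x.1 * x.2) (by fun_prop) continuousAt_const
        (hslit _ hx.1 _ hx.2)).continuousWithinAt
  have hIcc : ∀ t ∈ uIoc (0 : ℝ) 1, t ∈ Icc (0 : ℝ) 1 := fun t ht =>
    Ioc_subset_Icc_self (by rwa [uIoc_of_le zero_le_one] at ht)
  refine (hasDerivAt_integral_of_dominated_loc_of_deriv_le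
    (F := fun w t => g t * (1 - w * t) ^ r)
    (F' := fun w t => g t * (r * (1 - w * t) ^ (r - 1) * -t))
    (bound := fun t => ‖r‖ * C * ‖g t‖) (closedBall_mem_nhds z hε) ?_
    (hg.mul_continuousOn ?_) ?_ ?_ (hg.norm.const_mul _) ?_).2
  · exact .of_forall fun x => hg.def'.aestronglyMeasurable.mul
      (Measurable.pow_const (by fun_prop) r).aestronglyMeasurable
  · rw [uIcc_of_le zero_le_one]
    exact continuousOn_one_sub_mul_cpow hz r
  · exact hg.def'.aestronglyMeasurable.mul
      (((Measurable.pow_const (by fun_prop) _).const_mul r).mul (by fun_prop)).aestronglyMeasurable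
  · refine .of_forall fun t ht x hx => ?_
    have htI := hIcc t ht
    have ht1 : ‖(t : ℂ)‖ ≤ 1 := by simpa [abs_of_nonneg htI.1] using htI.2
    have hCx : ‖(1 - x * t) ^ (r - 1)‖ ≤ C := hC (x, t) ⟨hx, htI⟩
    calc ‖g t * (r * (1 - x * t) ^ (r - 1) * -t)‖
        = ‖g t‖ * (‖r‖ * ‖(1 - x * t) ^ (r - 1)‖ * ‖(t : ℂ)‖) := by simp
      _ ≤ ‖g t‖ * (‖r‖ * C * 1) := by
        gcongr
        exact mul_nonneg (norm_nonneg r) ((norm_nonneg _).trans hCx)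
      _ = ‖r‖ * C * ‖g t‖ := by ring
  · refine .of_forall fun t ht x hx => ?_
    have hinner : HasDerivAt (fun w : ℂ => 1 - w * t) (-t) x := by
      simpa using ((hasDerivAt_id x).mul_const (t : ℂ)).const_sub 1
    exact (hinner.cpow_const (hslit x hx t (hIcc t ht))).const_mul _

theorem hasDerivAt_eulerIntegral (hp : 0 < p.re) (hq : -1 < q.re) (r : ℂ)
    (hz : z ∉ ((↑) : ℝ → ℂ) '' Ici 1) :
    HasDerivAt (eulerIntegral (p - 1) q r) (-r * eulerIntegral p q (r - 1) z) z := by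
  have hg := intervalIntegrable_cpow_mul_cpow_mul (p := p - 1) (g := fun _ => 1)
    (re_sub_one_gt_neg_one hp) hq continuousOn_const
  simp only [mul_one] at hg
  refine (hasDerivAt_integral_mul_one_sub_mul_cpow hg r hz).congr_deriv ?_
  rw [eulerIntegral, ← intervalIntegral.integral_const_mul]
  refine integral_congr_Ioo_of_le zero_le_one fun t ht => ?_
  rw [← cpow_sub_one_mul_self p (ofReal_ne_zero.2 ht.1.ne')]
  ring

theorem eulerIntegral_sub_one_sub_one (hp : 0 < p.re) (hq : 0 < q.re) (r : ℂ)
    (hz : z ∉ ((↑) : ℝ → ℂ) '' Ici 1) :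
    eulerIntegral (p - 1) (q - 1) r z =
      eulerIntegral p (q - 1) r z + eulerIntegral (p - 1) q r z := by
  unfold eulerIntegral
  rw [← integral_add
      (intervalIntegrable_eulerIntegrand (by linarith) (re_sub_one_gt_neg_one hq) r hz)
      (intervalIntegrable_eulerIntegrand (re_sub_one_gt_neg_one hp) (by linarith) r hz)]
  refine integral_congr_Ioo_of_le zero_le_one fun t ht => ?_
  have ht₁ : (1 : ℂ) - t ≠ 0 := by exact_mod_cast (sub_pos.2 ht.2).ne'
  rw [← cpow_sub_one_mul_self p (ofReal_ne_zero.2 ht.1.ne'), ← cpow_sub_one_mul_self q ht₁]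
  ring

theorem eulerIntegral_sub_one_eq_one_sub_mul_add_mul (hp : -1 < p.re) (hq : 0 < q.re) (r : ℂ)
    (hz : z ∉ ((↑) : ℝ → ℂ) '' Ici 1) :
    eulerIntegral p (q - 1) r z =
      (1 - z) * eulerIntegral p (q - 1) (r - 1) z + z * eulerIntegral p q (r - 1) z := by
  unfold eulerIntegral
  rw [← intervalIntegral.integral_const_mul, ← intervalIntegral.integral_const_mul,
    ← integral_add
      ((intervalIntegrable_eulerIntegrand hp (re_sub_one_gt_neg_one hq) (r - 1) hz).const_mul _)
      ((intervalIntegrable_eulerIntegrand hp (by linarith) (r - 1) hz).const_mul _)]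
  refine integral_congr_Ioo_of_le zero_le_one fun t ht => ?_
  have ht₁ : (1 : ℂ) - t ≠ 0 := by exact_mod_cast (sub_pos.2 ht.2).ne'
  have hzt : 1 - z * t ≠ 0 :=
    slitPlane_ne_zero (one_sub_mul_ofReal_mem_slitPlane hz (Ioo_subset_Icc_self ht))
  rw [← cpow_sub_one_mul_self q ht₁, ← cpow_sub_one_mul_self r hzt]
  ring

theorem hasDerivAt_eulerIntegrand (r : ℂ) (hz : z ∉ ((↑) : ℝ → ℂ) '' Ici 1) {t : ℝ}
    (ht : t ∈ Ioo (0 : ℝ) 1) :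
    HasDerivAt (fun s : ℝ => (s : ℂ) ^ p * ((1 : ℂ) - s) ^ q * (1 - z * s) ^ r)
      (p * ((t : ℂ) ^ (p - 1) * ((1 : ℂ) - t) ^ q * (1 - z * t) ^ r)
        - q * ((t : ℂ) ^ p * ((1 : ℂ) - t) ^ (q - 1) * (1 - z * t) ^ r)
        - r * z * ((t : ℂ) ^ p * ((1 : ℂ) - t) ^ q * (1 - z * t) ^ (r - 1))) t := by
  have hU : HasDerivAt (fun y : ℂ => y ^ p) (p * (t : ℂ) ^ (p - 1) * 1) t :=
    (hasDerivAt_id (t : ℂ)).cpow_const (Or.inl (by simpa using ht.1))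
  have hV : HasDerivAt (fun y : ℂ => (1 - y) ^ q) (q * ((1 : ℂ) - t) ^ (q - 1) * -1) t :=
    ((hasDerivAt_id (t : ℂ)).const_sub 1).cpow_const (Or.inl (by simpa using ht.2))
  have hW : HasDerivAt (fun y : ℂ => (1 - z * y) ^ r) (r * (1 - z * t) ^ (r - 1) * -(z * 1)) t :=
    (((hasDerivAt_id (t : ℂ)).const_mul z).const_sub 1).cpow_const
      (one_sub_mul_ofReal_mem_slitPlane hz (Ioo_subset_Icc_self ht))
  refine ((hU.mul hV).mul hW).comp_ofReal.congr_deriv ?_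
  simp only [Pi.mul_apply]
  ring

theorem continuousOn_eulerIntegrand (hp : 0 < p.re) (hq : 0 < q.re) (r : ℂ)
    (hz : z ∉ ((↑) : ℝ → ℂ) '' Ici 1) :
    ContinuousOn (fun s : ℝ => (s : ℂ) ^ p * ((1 : ℂ) - s) ^ q * (1 - z * s) ^ r) (Icc 0 1) := by
  refine ContinuousOn.mul (ContinuousOn.mul ?_ ?_) (continuousOn_one_sub_mul_cpow hz r)
  · exact fun t ht => ((continuousAt_cpow_const_of_re_pos (Or.inl (by simpa using ht.1)) hp).comp
      continuous_ofReal.continuousAt).continuousWithinAt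
  · exact fun t ht => ((continuousAt_cpow_const_of_re_pos (Or.inl (by simpa using ht.2)) hq).comp
      (continuous_const.sub continuous_ofReal).continuousAt).continuousWithinAt

theorem eulerIntegral_integration_by_parts (hp : 0 < p.re) (hq : 0 < q.re) (r : ℂ)
    (hz : z ∉ ((↑) : ℝ → ℂ) '' Ici 1) :
    p * eulerIntegral (p - 1) q r z - q * eulerIntegral p (q - 1) r z
      - r * z * eulerIntegral p q (r - 1) z = 0 := by
  have i₁ := (intervalIntegrable_eulerIntegrand (p := p - 1) (q := q) (re_sub_one_gt_neg_one hp)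
    (by linarith) r hz).const_mul p
  have i₂ := (intervalIntegrable_eulerIntegrand (p := p) (q := q - 1) (by linarith)
    (re_sub_one_gt_neg_one hq) r hz).const_mul q
  have i₃ := (intervalIntegrable_eulerIntegrand (p := p) (q := q) (by linarith)
    (by linarith) (r - 1) hz).const_mul (r * z)
  have hFTC := integral_eq_sub_of_hasDerivAt_of_le zero_le_one
    (continuousOn_eulerIntegrand hp hq r hz) (fun t ht => hasDerivAt_eulerIntegrand r hz ht)
    ((i₁.sub i₂).sub i₃)
  rw [integral_sub (i₁.sub i₂) i₃, integral_sub i₁ i₂, intervalIntegral.integral_const_mul,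
    intervalIntegral.integral_const_mul, intervalIntegral.integral_const_mul] at hFTC
  have hp₀ : p ≠ 0 := fun h => by simp [h] at hp
  have hq₀ : q ≠ 0 := fun h => by simp [h] at hq
  simp only [ofReal_one, one_cpow, sub_self, zero_cpow hq₀, mul_zero, mul_one, zero_mul,
    ofReal_zero, zero_cpow hp₀, sub_zero] at hFTC
  exact hFTC

end

/-- The twisted-cycle integrals `f₀₁(z) = ∫₀¹ t^{a-1}(1-t)^{c-a-1}(1-zt)^{-b} dt` and
`f_{∞0}(z) = ∫₀¹ t^{a-1}(1-t)^{c-a}(1-zt)^{-b} dt` satisfy the Haraoka first-order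
Fuchsian system for Gauss' hypergeometric equation, for `z ∉ [1,∞)`, `z ≠ 0`. -/
theorem stmt14 (a b c : ℂ) (ha : 0 < a.re) (hca : 0 < (c - a).re)
    (f01 finf0 : ℂ → ℂ)
    (hf01 : ∀ w : ℂ, f01 w = ∫ t in (0 : ℝ)..1,
      (t : ℂ) ^ (a - 1) * ((1 : ℂ) - (t : ℂ)) ^ (c - a - 1) * (1 - w * (t : ℂ)) ^ (-b))
    (hfinf0 : ∀ w : ℂ, finf0 w = ∫ t in (0 : ℝ)..1,
      (t : ℂ) ^ (a - 1) * ((1 : ℂ) - (t : ℂ)) ^ (c - a) * (1 - w * (t : ℂ)) ^ (-b))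
    (z : ℂ) (hz1 : ∀ r : ℝ, 1 ≤ r → z ≠ (r : ℂ)) (hz0 : z ≠ 0) :
    HasDerivAt f01 ((c - a - b)/(z - 1) * f01 z + (b - c)/(z - 1) * finf0 z) z ∧
    HasDerivAt finf0 ((c - a)/z * f01 z - c/z * finf0 z) z := by
  have hz : z ∉ ((↑) : ℝ → ℂ) '' Ici 1 := by
    rintro ⟨r, hr, rfl⟩
    exact hz1 r hr rfl
  have hz₁ : z - 1 ≠ 0 := sub_ne_zero.2 (by exact_mod_cast hz1 1 le_rfl)
  obtain rfl : f01 = eulerIntegral (a - 1) (c - a - 1) (-b) := funext hf01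
  obtain rfl : finf0 = eulerIntegral (a - 1) (c - a) (-b) := funext hfinf0
  have hE₁ := eulerIntegral_sub_one_sub_one ha hca (-b) hz
  have hE₂ := eulerIntegral_sub_one_eq_one_sub_mul_add_mul (p := a) (by linarith) hca (-b) hz
  have hIBP := eulerIntegral_integration_by_parts ha hca (-b) hz
  have hd₁ := hasDerivAt_eulerIntegral (q := c - a - 1) ha (re_sub_one_gt_neg_one hca) (-b) hz
  have hd₂ := hasDerivAt_eulerIntegral (q := c - a) ha (by linarith) (-b) hz
  constructor
  · refine hd₁.congr_deriv ?_
    rw [div_mul_eq_mul_div, div_mul_eq_mul_div, ← add_div, eq_div_iff hz₁]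
    linear_combination hIBP + b * hE₂ - (c - a - b) * hE₁
  · refine hd₂.congr_deriv ?_
    rw [div_mul_eq_mul_div, div_mul_eq_mul_div, ← sub_div, eq_div_iff hz0]
    linear_combination hIBP - (c - a) * hE₁
end
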